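/- arXiv:1409.2787 — 4 statements merged into one kernel-verified Lean document; each statement's English description precedes it below -/
import Mathlib

section
/- Let 0 < α < 1 and let (x_n) be a bounded sequence of real numbers such that (x_n) is not p-summable (i.e., Σ|x_n|^p = ∞) for some 1 ≤ p < ∞. Then there exists a bounded sequence (y_n) of nonnegative reals such that (x_n y_n) is p-summable but (x_n y_n^α) is not p-summable. -/
/-!
Put `S n = 1 + ∑_{i<n} |x i|^p`, which increases to `∞`, and `y n = S (n+1) ^ (-1/(α p))`.
Then `|x n y n|^p = (S (n+1) - S n) / S (n+1) ^ (1/α)` and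
`|x n (y n)^α|^p = (S (n+1) - S n) / S (n+1)`, and by the Abel–Dini theorem the first series
converges because `1/α > 1`, while the second diverges.
-/

open Filter Topology Finset

lemma one_add_mul_one_sub_le_rpow_neg {ε u : ℝ} (hε : 0 ≤ ε) (hu : 0 < u) :
    1 + ε * (1 - u) ≤ u ^ (-ε) := by
  rw [Real.rpow_def_of_pos hu]
  have hlog := Real.log_le_sub_one_of_pos hu
  calc 1 + ε * (1 - u) ≤ Real.exp (ε * (1 - u)) := by
        linarith [Real.add_one_le_exp (ε * (1 - u))]
    _ ≤ Real.exp (Real.log u * -ε) := Real.exp_le_exp.mpr (by nlinarith)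

/-- The tangent-line bound for the convex function `u ↦ u ^ (1 - r)` at `t`, evaluated at `s`. -/
lemma mul_sub_div_rpow_le {r s t : ℝ} (hr : 1 ≤ r) (hs : 0 < s) (ht : 0 < t) :
    (r - 1) * ((t - s) / t ^ r) ≤ s ^ (1 - r) - t ^ (1 - r) := by
  have hbern := one_add_mul_one_sub_le_rpow_neg (sub_nonneg.mpr hr) (div_pos hs ht)
  rw [neg_sub, Real.div_rpow hs.le ht.le, le_div_iff₀ (Real.rpow_pos_of_pos ht _)] at hbern
  have htr : t ^ (1 - r) = t / t ^ r := by
    rw [Real.rpow_sub ht, Real.rpow_one]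
  rw [htr] at hbern ⊢
  have htr_pos : 0 < t ^ r := Real.rpow_pos_of_pos ht r
  field_simp at hbern ⊢
  nlinarith

namespace Monotone

variable {S : ℕ → ℝ}

theorem summable_sub_div_rpow (hS : Monotone S) (hS₀ : 0 < S 0) {r : ℝ} (hr : 1 < r) :
    Summable fun n => (S (n + 1) - S n) / S (n + 1) ^ r := by
  have hpos n : 0 < S n := hS₀.trans_le (hS (Nat.zero_le n))
  have hr₀ : 0 < r - 1 := sub_pos.mpr hr
  refine summable_of_sum_range_le (c := S 0 ^ (1 - r) / (r - 1))
    (fun n => div_nonneg (sub_nonneg.mpr (hS n.le_succ)) (Real.rpow_nonneg (hpos _).le r))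
    fun N => ?_
  rw [le_div_iff₀' hr₀, mul_sum]
  calc ∑ n ∈ range N, (r - 1) * ((S (n + 1) - S n) / S (n + 1) ^ r)
      ≤ ∑ n ∈ range N, (S n ^ (1 - r) - S (n + 1) ^ (1 - r)) :=
        sum_le_sum fun n _ => mul_sub_div_rpow_le hr.le (hpos n) (hpos (n + 1))
    _ = S 0 ^ (1 - r) - S N ^ (1 - r) := sum_range_sub' (fun n => S n ^ (1 - r)) N
    _ ≤ S 0 ^ (1 - r) := sub_le_self _ (Real.rpow_nonneg (hpos N).le _)

theorem not_summable_sub_div (hS : Monotone S) (hS₀ : 0 < S 0)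
    (hS_top : Tendsto S atTop atTop) :
    ¬ Summable fun n => (S (n + 1) - S n) / S (n + 1) := by
  set b := fun n => (S (n + 1) - S n) / S (n + 1)
  have hpos n : 0 < S n := hS₀.trans_le (hS (Nat.zero_le n))
  have hb n : 0 ≤ b n := div_nonneg (sub_nonneg.mpr (hS n.le_succ)) (hpos _).le
  intro hsum
  -- Every tail of the series is at least `1`, as `∑_{N ≤ n < N+M} b n ≥ 1 - S N / S (N + M)`.
  have htail N : 1 ≤ ∑' k, b (k + N) := by
    have hblock M : 1 - S N / S (M + N) ≤ ∑ k ∈ range M, b (k + N) := by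
      calc 1 - S N / S (M + N) = ∑ k ∈ range M, (S (k + 1 + N) - S (k + N)) / S (M + N) := by
            rw [← sum_div, sum_range_sub (fun k => S (k + N)), zero_add, sub_div,
              div_self (hpos _).ne']
        _ ≤ ∑ k ∈ range M, b (k + N) := by
            refine sum_le_sum fun k hk => ?_
            rw [add_right_comm]
            exact div_le_div_of_nonneg_left (sub_nonneg.mpr (hS (Nat.le_succ _))) (hpos _)
              (hS (show k + N + 1 ≤ M + N by simp at hk; omega))
    have hlim : Tendsto (fun M => 1 - S N / S (M + N)) atTop (𝓝 1) := by
      simpa using tendsto_const_nhds.sub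
        (tendsto_const_nhds.div_atTop (hS_top.comp (tendsto_add_atTop_nat N)))
    exact le_of_tendsto' hlim fun M =>
      (hblock M).trans (((summable_nat_add_iff N).mpr hsum).sum_le_tsum _ fun k _ => hb _)
  have := ge_of_tendsto' (tendsto_sum_nat_add b) htail
  norm_num at this

end Monotone

lemma abs_mul_rpow_rpow {T : ℝ} (hT : 0 ≤ T) (x e p : ℝ) :
    |x * T ^ e| ^ p = |x| ^ p * T ^ (e * p) := by
  rw [abs_mul, abs_of_nonneg (Real.rpow_nonneg hT e), Real.mul_rpow (abs_nonneg x)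
    (Real.rpow_nonneg hT e), ← Real.rpow_mul hT]

theorem stmt0_general (α p : ℝ) (hα0 : 0 < α) (hα1 : α < 1) (hp : 1 ≤ p)
    (x : ℕ → ℝ)
    (hns : ¬ Summable fun n => |x n| ^ p) :
    ∃ y : ℕ → ℝ, (∀ n, 0 ≤ y n) ∧ (∃ C : ℝ, ∀ n, y n ≤ C) ∧
      (Summable fun n => |x n * y n| ^ p) ∧
      ¬ Summable fun n => |x n * y n ^ α| ^ p := by
  set S : ℕ → ℝ := fun n => 1 + ∑ i ∈ range n, |x i| ^ p
  have hS_succ n : S (n + 1) - S n = |x n| ^ p := by simp [S, sum_range_succ]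
  have hS : Monotone S := monotone_nat_of_le_succ fun n => by
    linarith [hS_succ n, Real.rpow_nonneg (abs_nonneg (x n)) p]
  have hS₀ : 0 < S 0 := by simp [S]
  have hS_top : Tendsto S atTop atTop := tendsto_atTop_add_const_left _ 1 <|
    (not_summable_iff_tendsto_nat_atTop_of_nonneg fun n => Real.rpow_nonneg (abs_nonneg _) p).mp hns
  have hS_one n : 1 ≤ S (n + 1) :=
    (show (1 : ℝ) = S 0 by simp [S]).trans_le (hS (Nat.zero_le _))
  have hp₀ : p ≠ 0 := by positivity
  refine ⟨fun n => S (n + 1) ^ (-(α * p)⁻¹), fun n => by positivity, ⟨1, fun n =>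
    Real.rpow_le_one_of_one_le_of_nonpos (hS_one n) (by simp; positivity)⟩, ?_, ?_⟩
  · convert hS.summable_sub_div_rpow hS₀ (one_lt_inv_iff₀.mpr ⟨hα0, hα1⟩) using 2 with n
    have hexp : -(α * p)⁻¹ * p = -α⁻¹ := by field_simp
    rw [abs_mul_rpow_rpow (by positivity), hS_succ, hexp, Real.rpow_neg (by positivity),
      div_eq_mul_inv]
  · convert hS.not_summable_sub_div hS₀ hS_top using 3 with n
    have hexp : -(α * p)⁻¹ * α * p = -1 := by field_simp
    rw [← Real.rpow_mul (by positivity), abs_mul_rpow_rpow (by positivity), hS_succ, hexp,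
      Real.rpow_neg_one, div_eq_mul_inv]

theorem stmt0 (α p : ℝ) (hα0 : 0 < α) (hα1 : α < 1) (hp : 1 ≤ p)
    (x : ℕ → ℝ) (hbdd : ∃ C : ℝ, ∀ n, |x n| ≤ C)
    (hns : ¬ Summable fun n => |x n| ^ p) :
    ∃ y : ℕ → ℝ, (∀ n, 0 ≤ y n) ∧ (∃ C : ℝ, ∀ n, y n ≤ C) ∧
      (Summable fun n => |x n * y n| ^ p) ∧
      ¬ Summable fun n => |x n * y n ^ α| ^ p :=
  stmt0_general α p hα0 hα1 hp x hns
end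

section
/- Let 0 < α < 1 and let (x_n) be a sequence of real numbers tending to 0 with Σ_{n}|x_n| = ∞. Then there exist mutually disjoint finite-or-infinite subsets I_1, I_2, … of ℕ such that Σ_{n∈I_k}|x_n| ≥ 1 for each k, and defining y_n = k^{-1/α} for n ∈ I_k and y_n = 0 otherwise, the sequence (x_n y_n) is absolutely summable while (x_n y_n^α) is not absolutely summable. -/
/-!
Since `x` is bounded, say `|x n| ≤ B`, and `∑ |x n| = ∞`, the naturals can be cut into
consecutive blocks `I k = [N k, N (k + 1))` by stopping each block as soon as its sum reaches `1`;
the overshoot is a single term, so every block sum `S k` lies in `[1, 1 + B]`. On block `k`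
the weights are `y = (k + 1) ^ (-1 / α)` and `y ^ α = (k + 1)⁻¹`, so, grouping the nonnegative
series by blocks, `∑ |x y| ≤ (1 + B) ∑ (k + 1) ^ (-1 / α) < ∞` because `1 / α > 1`, while
`∑ |x y ^ α| ≥ ∑ (k + 1)⁻¹ = ∞`.
-/

open Finset Filter

theorem exists_sum_Ico_lt_le_sum_Ico_succ {f : ℕ → ℝ}
    (hf : Tendsto (fun n => ∑ i ∈ range n, f i) atTop atTop) {t : ℝ} (ht : 0 < t) (a : ℕ) :
    ∃ c, a ≤ c ∧ ∑ i ∈ Ico a c, f i < t ∧ t ≤ ∑ i ∈ Ico a (c + 1), f i := by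
  by_contra! hstep
  have hbelow : ∀ n, a ≤ n → ∑ i ∈ Ico a n, f i < t := by
    intro n hn
    induction n, hn using Nat.le_induction with
    | base => simpa using ht
    | succ n hn ih => exact hstep n hn ih
  obtain ⟨n, hn, han⟩ :=
    ((hf.eventually_ge_atTop (∑ i ∈ range a, f i + t)).and (eventually_ge_atTop a)).exists
  have := hbelow n han
  rw [sum_Ico_eq_sub _ han] at this
  linarith

theorem exists_strictMono_sum_Ico_mem_Icc {f : ℕ → ℝ}
    (hf : Tendsto (fun n => ∑ i ∈ range n, f i) atTop atTop) {t B : ℝ} (ht : 0 < t)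
    (hB : ∀ n, f n ≤ B) :
    ∃ N : ℕ → ℕ, N 0 = 0 ∧ StrictMono N ∧
      ∀ k, ∑ i ∈ Ico (N k) (N (k + 1)), f i ∈ Set.Icc t (t + B) := by
  choose c hac hlt hle using exists_sum_Ico_lt_le_sum_Ico_succ hf ht
  let N : ℕ → ℕ := fun k => Nat.rec 0 (fun _ m => c m + 1) k
  refine ⟨N, rfl, strictMono_nat_of_lt_succ fun k => Nat.lt_succ_of_le (hac (N k)), fun k => ?_⟩
  change ∑ i ∈ Ico (N k) (c (N k) + 1), f i ∈ _
  refine ⟨hle (N k), ?_⟩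
  rw [sum_Ico_succ_top (hac (N k))]
  linarith [hlt (N k), hB (c (N k))]

theorem existsUnique_mem_Ico_of_strictMono {N : ℕ → ℕ} (hN : StrictMono N) (h0 : N 0 = 0)
    (n : ℕ) : ∃! k, n ∈ Set.Ico (N k) (N (k + 1)) := by
  refine existsUnique_of_exists_of_unique ?_ fun k l hk hl => ?_
  · induction n with
    | zero => exact ⟨0, by simpa [h0] using hN Nat.zero_lt_one⟩
    | succ n ih =>
      obtain ⟨k, hk, hk'⟩ := ih
      by_cases h : n + 1 < N (k + 1)
      · exact ⟨k, by omega, h⟩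
      · have := hN (Nat.lt_add_one (k + 1))
        exact ⟨k + 1, by omega, by omega⟩
  · by_contra hkl
    exact Set.disjoint_left.1 (by simpa using hN.monotone.pairwise_disjoint_on_Ico_succ hkl) hk hl

theorem tsum_Ico_eq_sum_Ico {f : ℕ → ℝ} (a b : ℕ) :
    ∑' n : Set.Ico a b, f n = ∑ n ∈ Ico a b, f n := by
  rw [← coe_Ico, Finset.tsum_subtype']

theorem summable_iff_summable_sum_Ico_of_nonneg {g : ℕ → ℝ} (hg : 0 ≤ g) {N : ℕ → ℕ}
    (hN : StrictMono N) (h0 : N 0 = 0) :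
    Summable g ↔ Summable fun k => ∑ n ∈ Ico (N k) (N (k + 1)), g n := by
  rw [summable_partition hg (existsUnique_mem_Ico_of_strictMono hN h0)]
  simp only [tsum_Ico_eq_sum_Ico]
  exact and_iff_right fun k => (Set.finite_Ico _ _).summable _

theorem summable_abs_mul_iff_of_eq_on_Ico {x y w : ℕ → ℝ} {N : ℕ → ℕ} (hN : StrictMono N)
    (h0 : N 0 = 0) (hy : ∀ k, ∀ n ∈ Set.Ico (N k) (N (k + 1)), y n = w k) :
    Summable (fun n => |x n * y n|) ↔
      Summable fun k => |w k| * ∑ n ∈ Ico (N k) (N (k + 1)), |x n| := by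
  rw [summable_iff_summable_sum_Ico_of_nonneg (fun n => abs_nonneg _) hN h0]
  refine summable_congr fun k => ?_
  rw [mul_sum]
  refine sum_congr rfl fun n hn => ?_
  rw [hy k n (by simpa using hn), abs_mul, mul_comm]

theorem rpow_neg_one_div_rpow {a α : ℝ} (ha : 0 ≤ a) (hα : α ≠ 0) :
    (a ^ (-(1 / α))) ^ α = a⁻¹ := by
  rw [Real.rpow_neg ha, Real.inv_rpow (Real.rpow_nonneg ha _), one_div, Real.rpow_inv_rpow ha hα]

theorem summable_nat_add_one_rpow_neg_one_div {α : ℝ} (hα0 : 0 < α) (hα1 : α < 1) :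
    Summable fun k : ℕ => ((k : ℝ) + 1) ^ (-(1 / α)) := by
  have h : -(1 / α) < -1 := neg_lt_neg (one_lt_one_div hα0 hα1)
  simpa using (summable_nat_add_iff 1).2 (Real.summable_nat_rpow.2 h)

theorem not_summable_nat_add_one_inv : ¬Summable fun k : ℕ => ((k : ℝ) + 1)⁻¹ := by
  simpa using (summable_nat_add_iff 1).not.2 Real.not_summable_natCast_inv

theorem stmt1 (α : ℝ) (hα0 : 0 < α) (hα1 : α < 1) (x : ℕ → ℝ)
    (hx0 : Filter.Tendsto x Filter.atTop (nhds 0))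
    (hns : ¬ Summable fun n => |x n|) :
    ∃ I : ℕ → Set ℕ, Pairwise (Function.onFun Disjoint I) ∧
      (∀ k, 1 ≤ ∑' n : I k, |x n|) ∧
      ∀ y : ℕ → ℝ,
        (∀ k, ∀ n ∈ I k, y n = ((k : ℝ) + 1) ^ (-(1 / α))) →
        (∀ n, n ∉ ⋃ k, I k → y n = 0) →
        (Summable fun n => |x n * y n|) ∧ ¬ Summable fun n => |x n * y n ^ α| := by
  obtain ⟨B, hB⟩ : ∃ B, ∀ n, |x n| ≤ B := by
    obtain ⟨B, hB⟩ := hx0.abs.bddAbove_range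
    exact ⟨B, fun n => hB ⟨n, rfl⟩⟩
  have hdiv : Tendsto (fun n => ∑ i ∈ range n, |x i|) atTop atTop :=
    (not_summable_iff_tendsto_nat_atTop_of_nonneg fun n => abs_nonneg _).1 hns
  obtain ⟨N, h0, hN, hS⟩ := exists_strictMono_sum_Ico_mem_Icc hdiv one_pos hB
  refine ⟨fun k => Set.Ico (N k) (N (k + 1)), ?_, fun k => ?_, fun y hy _ => ⟨?_, ?_⟩⟩
  · simpa using hN.monotone.pairwise_disjoint_on_Ico_succ
  · exact (hS k).1.trans_eq (tsum_Ico_eq_sum_Ico _ _).symm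
  · rw [summable_abs_mul_iff_of_eq_on_Ico hN h0 hy]
    refine ((summable_nat_add_one_rpow_neg_one_div hα0 hα1).mul_right (1 + B)).of_nonneg_of_le
      (fun k => by positivity) fun k => ?_
    rw [abs_of_pos (by positivity)]
    exact mul_le_mul_of_nonneg_left (hS k).2 (by positivity)
  · have hyα : ∀ k, ∀ n ∈ Set.Ico (N k) (N (k + 1)), y n ^ α = ((k : ℝ) + 1)⁻¹ :=
      fun k n hn => by rw [hy k n hn, rpow_neg_one_div_rpow (by positivity) hα0.ne']
    rw [summable_abs_mul_iff_of_eq_on_Ico (y := fun n => y n ^ α) hN h0 hyα]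
    refine fun h => not_summable_nat_add_one_inv <|
      h.of_nonneg_of_le (fun k => by positivity) fun k => ?_
    rw [abs_of_pos (by positivity)]
    exact le_mul_of_one_le_right (by positivity) (hS k).1
end

section
/- Let B be a commutative Banach algebra and let (A_t)_{t∈[2,∞)} be a family of closed subspaces of B such that A_s ⊆ A_t for s ≤ t and A_t · A_t ⊆ A_{t/2 ∨ 2} whenever t ≥ 4 (products of elements of A_t lie in A_{t/2}). Fix p > 2 with A_p ≠ A_2 and set p̃ = inf{q ∈ [2,∞) : A_q = A_p}. If p̃ > 1 and 0 < ε < min{1, p - p̃} with A_{p̃+ε} = A_p, then setting p' = p̃ + ε one has p'/2 < p̃ and hence A_{p'/2} ⊊ A_{p'} = A_p; in particular the closure of A_p · A_p is a proper subspace of A_p, so A_p is not square dense. -/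
/-!
Since `p' = p̃ + ε < p̃ + 1 ≤ 2 p̃`, the index `p'/2` lies below the infimum `p̃`, so `A_{p'/2}` is a
proper subspace of `A_p`. Every product of two elements of `A_p = A_{p'}` lies in the closed
subspace `A_{p'/2}`, which therefore contains the closure of their span but not `A_p`.
-/

theorem Submodule.closure_span_ne_of_subset_of_lt {R M : Type*} [Semiring R] [AddCommMonoid M]
    [Module R M] [TopologicalSpace M] {S : Set M} {C D : Submodule R M}
    (hC : IsClosed (C : Set M)) (hS : S ⊆ C) (hCD : C < D) :
    closure (span R S : Set M) ≠ D := by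
  intro h
  obtain ⟨x, hxD, hxC⟩ := SetLike.exists_of_lt hCD
  exact hxC (closure_minimal (span_le.2 hS) hC (h ▸ hxD))

theorem max_two_lt_of_lt_sInf {α : Type*} [PartialOrder α] {A : ℝ → α}
    (hmono : ∀ s t : ℝ, 2 ≤ s → s ≤ t → A s ≤ A t) {p : ℝ} (hp : 2 < p) (hne : A p ≠ A 2)
    {q : ℝ} (hqp : q ≤ p) (hq : q < sInf {r : ℝ | 2 ≤ r ∧ A r = A p}) :
    A (max q 2) < A p := by
  refine lt_of_le_of_ne (hmono _ _ (le_max_right _ _) (max_le hqp hp.le)) fun h => ?_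
  rcases le_total q 2 with hq2 | hq2
  · rw [max_eq_right hq2] at h
    exact hne h.symm
  · rw [max_eq_left hq2] at h
    exact notMem_of_lt_csInf hq ⟨2, fun _ hr => hr.1⟩ ⟨hq2, h⟩

theorem stmt13_general {B : Type*} [NormedCommRing B] [NormedAlgebra ℂ B]
    (A : ℝ → Submodule ℂ B) (hclosed : ∀ t : ℝ, IsClosed (A t : Set B))
    (hmono : ∀ s t : ℝ, 2 ≤ s → s ≤ t → A s ≤ A t)
    (hprod : ∀ t : ℝ, 2 ≤ t → ∀ u ∈ A t, ∀ v ∈ A t, u * v ∈ A (max (t / 2) 2))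
    (p : ℝ) (hp : 2 < p) (hne : A p ≠ A 2)
    (pt : ℝ) (hpt : pt = sInf {q : ℝ | 2 ≤ q ∧ A q = A p})
    (ε : ℝ) (hε0 : 0 < ε) (hε : ε < min 1 (p - pt)) (hAε : A (pt + ε) = A p) :
    (pt + ε) / 2 < pt ∧ A (pt + ε) = A p ∧ A (max ((pt + ε) / 2) 2) < A p ∧
    closure ((Submodule.span ℂ {w : B | ∃ u ∈ A p, ∃ v ∈ A p, w = u * v} : Submodule ℂ B) : Set B)
      ≠ (A p : Set B) := by
  have hpS : p ∈ {q : ℝ | 2 ≤ q ∧ A q = A p} := ⟨hp.le, rfl⟩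
  have hpt_le : pt ≤ p := hpt ▸ csInf_le ⟨2, fun _ hq => hq.1⟩ hpS
  have two_le_pt : 2 ≤ pt := hpt ▸ le_csInf ⟨p, hpS⟩ fun _ hq => hq.1
  have hε1 : ε < 1 := hε.trans_le (min_le_left _ _)
  have hhalf : (pt + ε) / 2 < pt := by linarith
  have hlt : A (max ((pt + ε) / 2) 2) < A p :=
    max_two_lt_of_lt_sInf hmono hp hne (by linarith) (hpt ▸ hhalf)
  refine ⟨hhalf, hAε, hlt, Submodule.closure_span_ne_of_subset_of_lt (hclosed _) ?_ hlt⟩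
  rintro _ ⟨u, hu, v, hv, rfl⟩
  rw [← hAε] at hu hv
  exact hprod _ (by linarith) u hu v hv

theorem stmt13 {B : Type*} [NormedCommRing B] [NormedAlgebra ℂ B] [CompleteSpace B]
    (A : ℝ → Submodule ℂ B) (hclosed : ∀ t : ℝ, IsClosed (A t : Set B))
    (hmono : ∀ s t : ℝ, 2 ≤ s → s ≤ t → A s ≤ A t)
    (hprod : ∀ t : ℝ, 2 ≤ t → ∀ u ∈ A t, ∀ v ∈ A t, u * v ∈ A (max (t / 2) 2))
    (p : ℝ) (hp : 2 < p) (hne : A p ≠ A 2)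
    (pt : ℝ) (hpt : pt = sInf {q : ℝ | 2 ≤ q ∧ A q = A p}) (hpt1 : 1 < pt)
    (ε : ℝ) (hε0 : 0 < ε) (hε : ε < min 1 (p - pt)) (hAε : A (pt + ε) = A p) :
    (pt + ε) / 2 < pt ∧ A (pt + ε) = A p ∧ A (max ((pt + ε) / 2) 2) < A p ∧
    closure ((Submodule.span ℂ {w : B | ∃ u ∈ A p, ∃ v ∈ A p, w = u * v} : Submodule ℂ B) : Set B)
      ≠ (A p : Set B) :=
  stmt13_general A hclosed hmono hprod p hp hne pt hpt ε hε0 hε hAε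
end

section
/- Let Θ be a countable set and a ∈ ℓ^∞(Θ) with ‖a‖_∞ ≤ 1, and suppose Σ_{θ∈Θ}|a(θ)|^p = ∞ for some p > 2. Set α = (p-2)/(2p) ∈ (0, 1/2). Then there exists b ∈ ℓ^∞(Θ) with ‖b‖_∞ ≤ 1 such that Σ_θ |a(θ)b(θ)|^p < ∞ but Σ_θ |a(θ) b(θ)^α|^p = ∞. -/
/-!
Enumerate `Θ` by `ℕ` and let `S n = 1 + ∑_{i<n} ‖a i‖ ^ p`, which increases to `∞`. Take
`b n = S (n+1) ^ (-2/(p-2))`. Then `(‖a n‖ b n) ^ p = (S (n+1) - S n) / S (n+1) ^ (2p/(p-2))` is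
dominated by the telescoping `1 / S n - 1 / S (n+1)`, while `(‖a n‖ b n ^ α) ^ p` is
`(S (n+1) - S n) / S (n+1)`, whose sum diverges by the Abel–Dini argument: its block from `N` to
`m` is at least `1 - S N / S m`, which tends to `1`.
-/

open Finset Filter Real Topology

section AbelDini

variable {S : ℕ → ℝ}

lemma sub_div_rpow_le_inv_sub_inv (hS : ∀ n, 1 ≤ S n) (hmono : Monotone S) {q : ℝ}
    (hq : 2 ≤ q) (n : ℕ) :
    (S (n + 1) - S n) / S (n + 1) ^ q ≤ (S n)⁻¹ - (S (n + 1))⁻¹ := by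
  have hpos : ∀ n, 0 < S n := fun n => zero_lt_one.trans_le (hS n)
  have hsq : S n * S (n + 1) ≤ S (n + 1) ^ q :=
    calc S n * S (n + 1) ≤ S (n + 1) ^ (2 : ℝ) := by
          rw [rpow_two, sq]
          exact mul_le_mul_of_nonneg_right (hmono n.le_succ) (hpos _).le
      _ ≤ S (n + 1) ^ q := rpow_le_rpow_of_exponent_le (hS _) hq
  calc (S (n + 1) - S n) / S (n + 1) ^ q ≤ (S (n + 1) - S n) / (S n * S (n + 1)) :=
        div_le_div_of_nonneg_left (sub_nonneg.2 (hmono n.le_succ))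
          (mul_pos (hpos n) (hpos _)) hsq
    _ = (S n)⁻¹ - (S (n + 1))⁻¹ := by
        field_simp [(hpos n).ne', (hpos (n + 1)).ne']

theorem summable_sub_div_rpow_of_monotone (hS : ∀ n, 1 ≤ S n) (hmono : Monotone S) {q : ℝ}
    (hq : 2 ≤ q) : Summable fun n => (S (n + 1) - S n) / S (n + 1) ^ q := by
  have hpos : ∀ n, 0 < S n := fun n => zero_lt_one.trans_le (hS n)
  refine summable_of_sum_range_le (c := (S 0)⁻¹) (fun n => div_nonneg
    (sub_nonneg.2 (hmono n.le_succ)) (rpow_nonneg (hpos _).le _)) fun N => ?_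
  calc ∑ n ∈ range N, (S (n + 1) - S n) / S (n + 1) ^ q
      ≤ ∑ n ∈ range N, ((S n)⁻¹ - (S (n + 1))⁻¹) :=
        sum_le_sum fun n _ => sub_div_rpow_le_inv_sub_inv hS hmono hq n
    _ = (S 0)⁻¹ - (S N)⁻¹ := sum_range_sub' (fun n => (S n)⁻¹) N
    _ ≤ (S 0)⁻¹ := sub_le_self _ (inv_nonneg.2 (hpos N).le)

lemma one_sub_div_le_sum_Ico_sub_div (hpos : ∀ n, 0 < S n) (hmono : Monotone S) {N m : ℕ}
    (hNm : N ≤ m) : 1 - S N / S m ≤ ∑ n ∈ Ico N m, (S (n + 1) - S n) / S (n + 1) := by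
  calc 1 - S N / S m = ∑ n ∈ Ico N m, (S (n + 1) - S n) / S m := by
        rw [← sum_div, sum_Ico_sub S hNm, sub_div, div_self (hpos m).ne']
    _ ≤ ∑ n ∈ Ico N m, (S (n + 1) - S n) / S (n + 1) :=
        sum_le_sum fun n hn => div_le_div_of_nonneg_left
          (sub_nonneg.2 (hmono n.le_succ)) (hpos _) (hmono (mem_Ico.1 hn).2)

theorem not_summable_sub_div_of_tendsto_atTop (hpos : ∀ n, 0 < S n) (hmono : Monotone S)
    (htop : Tendsto S atTop atTop) : ¬ Summable fun n => (S (n + 1) - S n) / S (n + 1) := by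
  intro hsum
  obtain ⟨N, hN⟩ := Metric.cauchySeq_iff'.1 hsum.hasSum.tendsto_sum_nat.cauchySeq (1 / 2)
    one_half_pos
  have hratio : Tendsto (fun m => S N / S m) atTop (𝓝 0) :=
    tendsto_const_nhds.div_atTop htop
  obtain ⟨m, hsmall, hm⟩ :=
    ((hratio.eventually (gt_mem_nhds one_half_pos)).and (eventually_ge_atTop N)).exists
  have hblock := one_sub_div_le_sum_Ico_sub_div hpos hmono hm
  have hcauchy := hN m hm
  rw [Real.dist_eq, ← sum_Ico_eq_sub _ hm, abs_lt] at hcauchy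
  linarith

end AbelDini

def onePlusPartialSum (c : ℕ → ℝ) (n : ℕ) : ℝ := 1 + ∑ i ∈ range n, c i

section onePlusPartialSum

variable {c : ℕ → ℝ}

@[simp]
lemma onePlusPartialSum_succ_sub (c : ℕ → ℝ) (n : ℕ) :
    onePlusPartialSum c (n + 1) - onePlusPartialSum c n = c n := by
  simp [onePlusPartialSum, sum_range_succ]

lemma one_le_onePlusPartialSum (hc : ∀ n, 0 ≤ c n) (n : ℕ) : 1 ≤ onePlusPartialSum c n :=
  le_add_of_nonneg_right (sum_nonneg fun i _ => hc i)

lemma monotone_onePlusPartialSum (hc : ∀ n, 0 ≤ c n) : Monotone (onePlusPartialSum c) :=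
  monotone_nat_of_le_succ fun n => sub_nonneg.1 <| (onePlusPartialSum_succ_sub c n).symm ▸ hc n

lemma tendsto_onePlusPartialSum_atTop (hc : ∀ n, 0 ≤ c n) (hns : ¬ Summable c) :
    Tendsto (onePlusPartialSum c) atTop atTop :=
  tendsto_atTop_add_const_left atTop 1 <| (not_summable_iff_tendsto_nat_atTop_of_nonneg hc).1 hns

end onePlusPartialSum

lemma mul_rpow_neg_rpow {x s : ℝ} (hx : 0 ≤ x) (hs : 0 ≤ s) (t p : ℝ) :
    (x * s ^ (-t)) ^ p = x ^ p / s ^ (t * p) := by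
  rw [mul_rpow hx (rpow_nonneg hs _), ← rpow_mul hs, neg_mul, rpow_neg hs, div_eq_mul_inv]

theorem stmt18_general {Θ : Type*} [Countable Θ] (p : ℝ) (hp : 2 < p)
    (a : Θ → ℂ)
    (hns : ¬ Summable fun θ => ‖a θ‖ ^ p) :
    ∃ b : Θ → ℝ, (∀ θ, 0 ≤ b θ) ∧ (∀ θ, b θ ≤ 1) ∧
      (Summable fun θ => (‖a θ‖ * b θ) ^ p) ∧
      ¬ Summable fun θ => (‖a θ‖ * b θ ^ ((p - 2) / (2 * p))) ^ p := by
  have : Infinite Θ := not_finite_iff_infinite.1 fun _ => hns .of_finite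
  obtain ⟨_⟩ := nonempty_denumerable Θ
  set e : ℕ ≃ Θ := (Denumerable.eqv Θ).symm
  set c : ℕ → ℝ := fun n => ‖a (e n)‖ ^ p
  have hc : ∀ n, 0 ≤ c n := fun n => rpow_nonneg (norm_nonneg _) p
  set S := onePlusPartialSum c
  have hS1 : ∀ n, 1 ≤ S n := one_le_onePlusPartialSum hc
  have hS0 : ∀ n, 0 ≤ S n := fun n => zero_le_one.trans (hS1 n)
  have hp2 : 0 < p - 2 := sub_pos.2 hp
  set r := 2 / (p - 2) with hr_def
  have hr : 0 < r := div_pos two_pos hp2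
  have hrp : 2 ≤ r * p := by
    rw [div_mul_eq_mul_div, le_div_iff₀ hp2]; linarith
  have hrαp : r * ((p - 2) / (2 * p)) * p = 1 := by
    rw [hr_def]; field_simp [hp2.ne', (zero_lt_two.trans hp).ne']
  refine ⟨fun θ => S (e.symm θ + 1) ^ (-r), fun θ => rpow_nonneg (hS0 _) _,
    fun θ => rpow_le_one_of_one_le_of_nonpos (hS1 _) (neg_nonpos.2 hr.le), ?_, ?_⟩
  · rw [← e.summable_iff]
    refine (summable_sub_div_rpow_of_monotone hS1 (monotone_onePlusPartialSum hc) hrp).congr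
      fun n => ?_
    simp [S, c, mul_rpow_neg_rpow (norm_nonneg _) (hS0 _)]
  · rw [← e.summable_iff]
    convert not_summable_sub_div_of_tendsto_atTop (fun n => zero_lt_one.trans_le (hS1 n))
      (monotone_onePlusPartialSum hc) (tendsto_onePlusPartialSum_atTop hc
        (e.summable_iff.not.2 hns)) using 2
    ext n
    simp [S, c, ← rpow_mul (hS0 _), mul_rpow_neg_rpow (norm_nonneg _) (hS0 _), hrαp]

theorem stmt18 {Θ : Type*} [Countable Θ] (p : ℝ) (hp : 2 < p)
    (a : Θ → ℂ) (ha : ∀ θ, ‖a θ‖ ≤ 1)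
    (hns : ¬ Summable fun θ => ‖a θ‖ ^ p) :
    ∃ b : Θ → ℝ, (∀ θ, 0 ≤ b θ) ∧ (∀ θ, b θ ≤ 1) ∧
      (Summable fun θ => (‖a θ‖ * b θ) ^ p) ∧
      ¬ Summable fun θ => (‖a θ‖ * b θ ^ ((p - 2) / (2 * p))) ^ p :=
  stmt18_general p hp a hns
end
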